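/- arXiv:1303.3083 — 5 statements merged into one kernel-verified Lean document; each statement's English description precedes it below -/
import Mathlib

section
/- Harary's Balance Theorem: A signed simple graph Σ = (Γ, σ) is balanced if and only if there is a bipartition of the vertex set V into two (possibly empty) sets X and Y such that an edge of Γ is negative precisely when it has one endpoint in X and one endpoint in Y. -/
/-!
A cycle-positive signing makes every closed walk positive: shortcutting a walk to its bypass path
only removes closed subwalks that are an edge followed by a path, i.e. a cycle or an edge
traversed back and forth. Hence the sign of a walk depends only on its endpoints, and within each
connected component the sign of a walk from a fixed root to `v` is a switching function
`g : V → {±1}` with `σ(vw) = g(v) g(w)`; take `X = {g = -1}`. Conversely, along any walk such a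
product telescopes, so closed walks are positive.
-/

open SimpleGraph

/-- A signed simple graph `(G, σ)` is balanced if every cycle is positive,
i.e., the product of the signs of its edges is `+1`. -/
def IsBalanced {V : Type*} (G : SimpleGraph V) (σ : Sym2 V → ℤ) : Prop :=
  ∀ ⦃v : V⦄ (w : G.Walk v v), w.IsCycle → (w.edges.map σ).prod = 1

lemma Int.eq_mul_iff_eq_neg_one_iff_xor {s a b : ℤ} (hs : s = 1 ∨ s = -1)
    (ha : a = 1 ∨ a = -1) (hb : b = 1 ∨ b = -1) :
    s = a * b ↔ (s = -1 ↔ (a = -1 ∧ b ≠ -1 ∨ a ≠ -1 ∧ b = -1)) := by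
  rcases hs with rfl | rfl <;> rcases ha with rfl | rfl <;> rcases hb with rfl | rfl <;> decide

namespace SimpleGraph.Walk

variable {V : Type*} {G : SimpleGraph V} (σ : Sym2 V → ℤ)

def sign {u v : V} (p : G.Walk u v) : ℤ := (p.edges.map σ).prod

@[simp] lemma sign_nil {u : V} : (nil : G.Walk u u).sign σ = 1 := rfl

@[simp] lemma sign_cons {u v w : V} (h : G.Adj u v) (p : G.Walk v w) :
    (cons h p).sign σ = σ s(u, v) * p.sign σ := by
  simp [sign]

@[simp] lemma sign_append {u v w : V} (p : G.Walk u v) (q : G.Walk v w) :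
    (p.append q).sign σ = p.sign σ * q.sign σ := by
  simp [sign]

@[simp] lemma sign_reverse {u v : V} (p : G.Walk u v) : p.reverse.sign σ = p.sign σ := by
  simp [sign, List.prod_reverse]

@[simp] lemma sign_copy {u v u' v' : V} (p : G.Walk u v) (hu : u = u') (hv : v = v') :
    (p.copy hu hv).sign σ = p.sign σ := by
  simp [sign]

lemma sign_eq_mul_of_switching {g : V → ℤ} (hg : ∀ v, g v = 1 ∨ g v = -1)
    (hsw : ∀ v w, G.Adj v w → σ s(v, w) = g v * g w) {u v : V} (p : G.Walk u v) :
    p.sign σ = g u * g v := by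
  induction p with
  | @nil u => rcases hg u with h | h <;> simp [h]
  | @cons a b c h p ih =>
    rcases hg b with hb | hb <;> simp [hsw a b h, ih, hb]

end SimpleGraph.Walk

section Balance

open SimpleGraph.Walk

variable {V : Type*} {G : SimpleGraph V} {σ : Sym2 V → ℤ}

lemma IsBalanced.sign_cons_eq_one_of_isPath (hσ : ∀ e ∈ G.edgeSet, σ e = 1 ∨ σ e = -1)
    (hbal : IsBalanced G σ) {u v : V} (h : G.Adj u v) {p : G.Walk v u} (hp : p.IsPath) :
    (cons h p).sign σ = 1 := by
  by_cases he : s(u, v) ∈ p.edges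
  · have hlen : p.length = 1 := hp.length_eq_one_of_mem_edges (Sym2.eq_swap ▸ he)
    rcases p with _ | ⟨h', _ | _⟩
    · simp at hlen
    · rw [sign_cons, sign_cons, sign_nil, Sym2.eq_swap]
      rcases hσ _ (G.mem_edgeSet.mpr h') with hs | hs <;> simp [hs]
    · simp at hlen
  · exact hbal _ ((cons_isCycle_iff p h).mpr ⟨hp, he⟩)

lemma IsBalanced.sign_bypass [DecidableEq V] (hσ : ∀ e ∈ G.edgeSet, σ e = 1 ∨ σ e = -1)
    (hbal : IsBalanced G σ) {u v : V} (p : G.Walk u v) : p.bypass.sign σ = p.sign σ := by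
  induction p with
  | nil => rfl
  | @cons u v w h p ih =>
    rw [bypass]
    split_ifs with hu
    · have hsplit := congrArg (sign σ) (p.bypass.take_spec hu)
      have hcycle := hbal.sign_cons_eq_one_of_isPath hσ h ((bypass_isPath p).takeUntil hu)
      rw [sign_append] at hsplit
      rw [sign_cons] at hcycle ⊢
      rw [← ih, ← hsplit, ← mul_assoc, hcycle, one_mul]
    · rw [sign_cons, sign_cons, ih]

lemma IsBalanced.sign_eq_one_of_closed (hσ : ∀ e ∈ G.edgeSet, σ e = 1 ∨ σ e = -1)
    (hbal : IsBalanced G σ) {u : V} (p : G.Walk u u) : p.sign σ = 1 := by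
  classical
  rw [← hbal.sign_bypass hσ, (isPath_iff_nil.mp (bypass_isPath p)).eq_nil, sign_nil]

lemma IsBalanced.sign_eq (hσ : ∀ e ∈ G.edgeSet, σ e = 1 ∨ σ e = -1)
    (hbal : IsBalanced G σ) {u v : V} (p q : G.Walk u v) : p.sign σ = q.sign σ :=
  Int.eq_of_mul_eq_one <| by
    simpa using hbal.sign_eq_one_of_closed hσ (p.append q.reverse)

lemma IsBalanced.exists_switching (hσ : ∀ e ∈ G.edgeSet, σ e = 1 ∨ σ e = -1)
    (hbal : IsBalanced G σ) :
    ∃ g : V → ℤ, (∀ v, g v = 1 ∨ g v = -1) ∧ ∀ v w, G.Adj v w → σ s(v, w) = g v * g w := by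
  have reach (v : V) : G.Reachable (G.connectedComponentMk v).out v :=
    ConnectedComponent.eq.mp (Quot.out_eq _)
  set g : V → ℤ := fun v ↦ (reach v).some.sign σ
  have hg_sq (v : V) : g v * g v = 1 := by
    simpa using hbal.sign_eq_one_of_closed hσ ((reach v).some.append (reach v).some.reverse)
  refine ⟨g, fun v ↦ Int.eq_one_or_neg_one_of_mul_eq_one (hg_sq v), fun v w hvw ↦ ?_⟩
  have hroot : (G.connectedComponentMk v).out = (G.connectedComponentMk w).out := by
    rw [ConnectedComponent.eq.mpr hvw.reachable]
  have hgw : g w = g v * σ s(v, w) := by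
    simpa using hbal.sign_eq hσ (reach w).some
      (((reach v).some.append (cons hvw nil)).copy hroot rfl)
  rw [hgw, ← mul_assoc, hg_sq, one_mul]

lemma isBalanced_of_switching {g : V → ℤ} (hg : ∀ v, g v = 1 ∨ g v = -1)
    (hsw : ∀ v w, G.Adj v w → σ s(v, w) = g v * g w) : IsBalanced G σ := by
  intro v p _
  change p.sign σ = 1
  rcases hg v with h | h <;> simp [sign_eq_mul_of_switching σ hg hsw p, h]

theorem isBalanced_iff_exists_switching (hσ : ∀ e ∈ G.edgeSet, σ e = 1 ∨ σ e = -1) :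
    IsBalanced G σ ↔
      ∃ g : V → ℤ, (∀ v, g v = 1 ∨ g v = -1) ∧ ∀ v w, G.Adj v w → σ s(v, w) = g v * g w :=
  ⟨IsBalanced.exists_switching hσ, fun ⟨_, hg, hsw⟩ ↦ isBalanced_of_switching hg hsw⟩

end Balance

theorem harary_balance_theorem_general {V : Type*} (G : SimpleGraph V)
    (σ : Sym2 V → ℤ) (hσ : ∀ e ∈ G.edgeSet, σ e = 1 ∨ σ e = -1) :
    IsBalanced G σ ↔
      ∃ X : Set V, ∀ v w : V, G.Adj v w →
        (σ s(v, w) = -1 ↔ ((v ∈ X ∧ w ∉ X) ∨ (v ∉ X ∧ w ∈ X))) := by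
  rw [isBalanced_iff_exists_switching hσ]
  constructor
  · rintro ⟨g, hg, hsw⟩
    exact ⟨{v | g v = -1}, fun v w hvw ↦
      (Int.eq_mul_iff_eq_neg_one_iff_xor (hσ _ hvw) (hg v) (hg w)).mp (hsw v w hvw)⟩
  · rintro ⟨X, hX⟩
    classical
    let g (v : V) : ℤ := if v ∈ X then -1 else 1
    have hg (v : V) : g v = 1 ∨ g v = -1 := by by_cases hv : v ∈ X <;> simp [g, hv]
    have hgX (v : V) : g v = -1 ↔ v ∈ X := by by_cases hv : v ∈ X <;> simp [g, hv]
    refine ⟨g, hg, fun v w hvw ↦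
      (Int.eq_mul_iff_eq_neg_one_iff_xor (hσ _ hvw) (hg v) (hg w)).mpr ?_⟩
    simpa only [hgX, ne_eq] using hX v w hvw

/-- Harary's Balance Theorem: a signed simple graph is balanced iff there is a bipartition
of the vertex set into `X` and its complement `Y` such that an edge is negative precisely
when it has one endpoint in `X` and one in `Y`. -/
theorem harary_balance_theorem {V : Type*} [Fintype V] (G : SimpleGraph V)
    (σ : Sym2 V → ℤ) (hσ : ∀ e ∈ G.edgeSet, σ e = 1 ∨ σ e = -1) :
    IsBalanced G σ ↔
      ∃ X : Set V, ∀ v w : V, G.Adj v w →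
        (σ s(v, w) = -1 ↔ ((v ∈ X ∧ w ∉ X) ∨ (v ∉ X ∧ w ∈ X))) :=
  harary_balance_theorem_general G σ hσ
end

section
/- Switching Equivalence Theorem: Two signed simple graphs Σ₁ = (Γ, σ₁) and Σ₂ = (Γ, σ₂) with the same underlying graph Γ are switching equivalent (i.e., there exists θ : V → {+1, −1} with σ₂(vw) = θ(v)σ₁(vw)θ(w) for every edge vw) if and only if they have the same class of positive cycles, i.e., for every cycle C of Γ the product of σ₁ over the edges of C equals the product of σ₂ over the edges of C. -/
/-!
Put `τ = σ₁ σ₂`. If the cycles have the same signs, `τ` is positive on every cycle, hence on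
every closed walk: shortcutting a walk to a path (`Walk.bypass`) only removes closed subwalks
of the form "edge followed by a path", each of which is a cycle or a back-and-forth step along
one edge. On each connected component fix a root and let `θ v` be the `τ`-sign of some walk
from the root to `v`; this does not depend on the walk, and `σ₂ = σ₁^θ`. Conversely, switching
multiplies the sign of a closed walk at `v` by `θ v ^ 2 = 1`.
-/

open SimpleGraph

theorem List.prod_map_mul_self_eq_one {α M : Type*} [CommMonoid M] {f : α → M} {l : List α}
    (hf : ∀ x ∈ l, f x * f x = 1) : (l.map f).prod * (l.map f).prod = 1 := by
  rw [← List.prod_map_mul]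
  exact List.prod_eq_one (by simpa using hf)

namespace SimpleGraph.Walk

variable {V M : Type*} [CommMonoid M] {G : SimpleGraph V} {τ : Sym2 V → M}

theorem prod_map_edges_mul_self_eq_one (hτ : ∀ e ∈ G.edgeSet, τ e * τ e = 1) {u v : V}
    (p : G.Walk u v) : (p.edges.map τ).prod * (p.edges.map τ).prod = 1 :=
  List.prod_map_mul_self_eq_one fun _ he => hτ _ (p.edges_subset_edgeSet he)

section CycleTrivial

variable (hτ : ∀ e ∈ G.edgeSet, τ e * τ e = 1)
  (hcyc : ∀ ⦃v : V⦄ (c : G.Walk v v), c.IsCycle → (c.edges.map τ).prod = 1)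
include hτ hcyc

theorem prod_map_edges_cons_eq_one_of_isPath {u v : V} (h : G.Adj u v) {p : G.Walk v u}
    (hp : p.IsPath) : ((cons h p).edges.map τ).prod = 1 := by
  by_cases he : s(u, v) ∈ p.edges
  · rw [hp.eq_adj_toWalk_of_mem_edges (Sym2.eq_swap ▸ he)]
    simpa [Sym2.eq_swap] using hτ _ h
  · exact hcyc _ ((cons_isCycle_iff p h).mpr ⟨hp, he⟩)

theorem prod_map_edges_bypass [DecidableEq V] {u v : V} (p : G.Walk u v) :
    (p.bypass.edges.map τ).prod = (p.edges.map τ).prod := by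
  induction p with
  | nil => rfl
  | @cons u x v h p ih =>
    rw [bypass]
    split_ifs with hs
    · have hloop := prod_map_edges_cons_eq_one_of_isPath hτ hcyc h
        (p.bypass_isPath.takeUntil hs)
      have hsplit := congrArg (fun q => (q.edges.map τ).prod) (p.bypass.take_spec hs)
      simp only [edges_cons, edges_append, List.map_cons, List.map_append,
        List.prod_cons, List.prod_append] at hloop hsplit ⊢
      rw [← ih, ← hsplit, ← mul_assoc, hloop, one_mul]
    · simp only [edges_cons, List.map_cons, List.prod_cons, ih]

theorem prod_map_edges_eq_one_of_closed {v : V} (w : G.Walk v v) :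
    (w.edges.map τ).prod = 1 := by
  classical
  rw [← prod_map_edges_bypass hτ hcyc, (isPath_iff_nil.mp w.bypass_isPath).eq_nil]
  rfl

end CycleTrivial

theorem prod_map_edges_of_switch {σ₁ σ₂ : Sym2 V → M} {θ : V → M} (hθ : ∀ v, θ v * θ v = 1)
    (hsw : ∀ v w, G.Adj v w → σ₂ s(v, w) = θ v * σ₁ s(v, w) * θ w) {u v : V}
    (p : G.Walk u v) : (p.edges.map σ₂).prod = θ u * (p.edges.map σ₁).prod * θ v := by
  induction p with
  | nil => simp [hθ]
  | @cons a b c h p ih =>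
    simp only [edges_cons, List.map_cons, List.prod_cons, hsw _ _ h, ih]
    calc θ a * σ₁ s(a, b) * θ b * (θ b * (p.edges.map σ₁).prod * θ c)
        = θ a * σ₁ s(a, b) * (θ b * θ b) * (p.edges.map σ₁).prod * θ c := by ac_rfl
      _ = θ a * (σ₁ s(a, b) * (p.edges.map σ₁).prod) * θ c := by rw [hθ, mul_one]; ac_rfl

end SimpleGraph.Walk

namespace SimpleGraph

variable {V M : Type*} [CommMonoid M] {G : SimpleGraph V}

theorem exists_potential_of_prod_closed_walk_eq_one {τ : Sym2 V → M}
    (hτ : ∀ e ∈ G.edgeSet, τ e * τ e = 1)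
    (hclosed : ∀ ⦃v : V⦄ (w : G.Walk v v), (w.edges.map τ).prod = 1) :
    ∃ θ : V → M, (∀ v, θ v * θ v = 1) ∧ ∀ v w, G.Adj v w → θ v * τ s(v, w) * θ w = 1 := by
  let root (v : V) : V := (G.connectedComponentMk v).out
  let path (v : V) : G.Walk (root v) v := (ConnectedComponent.exact (Quot.out_eq _)).some
  refine ⟨fun v => ((path v).edges.map τ).prod,
    fun v => (path v).prod_map_edges_mul_self_eq_one hτ, fun v w h => ?_⟩
  have hroot : root w = root v := by
    simp only [root, ConnectedComponent.sound h.reachable]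
  have hloop := hclosed ((path v).append (Walk.cons h ((path w).reverse.copy rfl hroot)))
  simpa only [Walk.edges_append, Walk.edges_cons, Walk.edges_copy, Walk.edges_reverse,
    List.map_append, List.map_cons, List.map_reverse, List.prod_append, List.prod_cons,
    List.prod_reverse, mul_assoc] using hloop

theorem exists_switching_iff_prod_cycle_eq {σ₁ σ₂ : Sym2 V → M}
    (hσ₁ : ∀ e ∈ G.edgeSet, σ₁ e * σ₁ e = 1) (hσ₂ : ∀ e ∈ G.edgeSet, σ₂ e * σ₂ e = 1) :
    (∃ θ : V → M, (∀ v, θ v * θ v = 1) ∧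
        ∀ v w : V, G.Adj v w → σ₂ s(v, w) = θ v * σ₁ s(v, w) * θ w) ↔
      ∀ ⦃v : V⦄ (w : G.Walk v v), w.IsCycle →
        (w.edges.map σ₁).prod = (w.edges.map σ₂).prod := by
  constructor
  · rintro ⟨θ, hθ, hsw⟩ v w -
    rw [Walk.prod_map_edges_of_switch hθ hsw, mul_right_comm, hθ, one_mul]
  · intro hcyc
    have hτ : ∀ e ∈ G.edgeSet, σ₁ e * σ₂ e * (σ₁ e * σ₂ e) = 1 := fun e he => by
      rw [mul_mul_mul_comm, hσ₁ e he, hσ₂ e he, one_mul]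
    obtain ⟨θ, hθ, hpot⟩ := exists_potential_of_prod_closed_walk_eq_one hτ
      fun _ => Walk.prod_map_edges_eq_one_of_closed hτ fun v c hc => by
        rw [List.prod_map_mul, ← hcyc c hc, c.prod_map_edges_mul_self_eq_one hσ₁]
    refine ⟨θ, hθ, fun v w h => ?_⟩
    calc σ₂ s(v, w) = (θ v * θ v) * (σ₁ s(v, w) * σ₁ s(v, w)) * (θ w * θ w) * σ₂ s(v, w) := by
          rw [hθ, hθ, hσ₁ _ h, one_mul, one_mul, one_mul]
      _ = θ v * σ₁ s(v, w) * θ w * (θ v * (σ₁ s(v, w) * σ₂ s(v, w)) * θ w) := by ac_rfl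
      _ = θ v * σ₁ s(v, w) * θ w := by rw [hpot v w h, mul_one]

end SimpleGraph

theorem switching_equivalence_general {V : Type*} (G : SimpleGraph V)
    (σ₁ σ₂ : Sym2 V → ℤ)
    (h₁ : ∀ e ∈ G.edgeSet, σ₁ e = 1 ∨ σ₁ e = -1)
    (h₂ : ∀ e ∈ G.edgeSet, σ₂ e = 1 ∨ σ₂ e = -1) :
    (∃ θ : V → ℤ, (∀ v, θ v = 1 ∨ θ v = -1) ∧
        ∀ v w : V, G.Adj v w → σ₂ s(v, w) = θ v * σ₁ s(v, w) * θ w) ↔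
      ∀ ⦃v : V⦄ (w : G.Walk v v), w.IsCycle →
        (w.edges.map σ₁).prod = (w.edges.map σ₂).prod := by
  simp only [← mul_self_eq_one_iff] at h₁ h₂ ⊢
  exact exists_switching_iff_prod_cycle_eq h₁ h₂

/-- Switching Equivalence Theorem: two signings `σ₁, σ₂` of the same graph `G` are
switching equivalent (there is `θ : V → {±1}` with `σ₂(vw) = θ(v)σ₁(vw)θ(w)` on every
edge) iff every cycle has the same sign in both, i.e., the product of `σ₁` over the
edges of any cycle equals the product of `σ₂` over them. -/
theorem switching_equivalence {V : Type*} [Fintype V] (G : SimpleGraph V)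
    (σ₁ σ₂ : Sym2 V → ℤ)
    (h₁ : ∀ e ∈ G.edgeSet, σ₁ e = 1 ∨ σ₁ e = -1)
    (h₂ : ∀ e ∈ G.edgeSet, σ₂ e = 1 ∨ σ₂ e = -1) :
    (∃ θ : V → ℤ, (∀ v, θ v = 1 ∨ θ v = -1) ∧
        ∀ v w : V, G.Adj v w → σ₂ s(v, w) = θ v * σ₁ s(v, w) * θ w) ↔
      ∀ ⦃v : V⦄ (w : G.Walk v v), w.IsCycle →
        (w.edges.map σ₁).prod = (w.edges.map σ₂).prod :=
  switching_equivalence_general G σ₁ σ₂ h₁ h₂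
end

section
/- A class B of cycles of a finite simple graph Γ is the class of negative cycles of some signed graph (Γ, σ) if and only if every theta subgraph of Γ contains an even number of cycles belonging to B, i.e., for every theta subgraph, an even number (0 or 2) of its three cycles lie in B. -/
/-!
Necessity: the sign of the cycle `pᵢ ∪ pⱼ` of a theta is `σ(pᵢ) σ(pⱼ)`, so the product of the
three signs is a square.

Sufficiency: work in `ZMod 2` and add the edges one at a time, keeping an edge labelling `s` whose
sum over every cycle made of the edges added so far is `[C ∈ B]`. Every new cycle through the new
edge `e = xy` is `e` plus an `x`–`y` path `P` of old edges, so `s e` is forced to be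
`[P ∪ e ∈ B] + s(P)`, and the point is that this does not depend on `P`. For internally disjoint
`P` and `Q` this is the theta condition on `P, Q, e`. Otherwise split both paths at the first vertex
`z` of `P` that is interior to `Q`, and use induction on the two smaller configurations between
`x, z` and between `z, y`, each closed up by a third path built from `e` and the remaining pieces.
-/

theorem ZMod.eq_zero_or_eq_one (a : ZMod 2) : a = 0 ∨ a = 1 := by
  revert a
  decide

theorem List.prod_map_neg_one_uzpow {α : Type*} (l : List α) (s : α → ZMod 2) :
    (l.map fun a ↦ (((-1 : ℤˣ) ^ s a : ℤˣ) : ℤ)).prod = (((-1 : ℤˣ) ^ (l.map s).sum : ℤˣ) : ℤ) := by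
  induction l with
  | nil => simp
  | cons a l ih => simp [ih, uzpow_add]

theorem neg_one_uzpow_eq_neg_one_iff (a : ZMod 2) :
    (((-1 : ℤˣ) ^ a : ℤˣ) : ℤ) = -1 ↔ a = 1 := by
  rcases a.eq_zero_or_eq_one with rfl | rfl <;> simp

theorem Set.eq_indicator_one_iff {α : Type*} {B : Set α} {C : α} {a : ZMod 2} :
    a = B.indicator 1 C ↔ (a = 1 ↔ C ∈ B) := by
  by_cases hC : C ∈ B <;> rcases a.eq_zero_or_eq_one with rfl | rfl <;> simp [hC]

theorem Set.indicator_add_indicator_add_indicator_eq_zero_iff {α : Type*} (B : Set α)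
    (a b c : α) :
    B.indicator 1 a + B.indicator 1 b + B.indicator 1 c = (0 : ZMod 2) ↔
      (a ∈ B ∧ b ∈ B ∧ c ∉ B) ∨ (a ∈ B ∧ b ∉ B ∧ c ∈ B) ∨ (a ∉ B ∧ b ∈ B ∧ c ∈ B) ∨
        (a ∉ B ∧ b ∉ B ∧ c ∉ B) := by
  by_cases ha : a ∈ B <;> by_cases hb : b ∈ B <;> by_cases hc : c ∈ B <;> simp [ha, hb, hc] <;>
    decide

namespace SimpleGraph.Walk

variable {V : Type*} {G : SimpleGraph V} {u v w x y z : V}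

def InternallyDisjoint (p q : G.Walk u v) : Prop :=
  ∀ a ∈ p.support, a ∈ q.support → a = u ∨ a = v

structure IsCyclePair (p q : G.Walk u v) : Prop where
  isPath_left : p.IsPath
  isPath_right : q.IsPath
  ne : p ≠ q
  internallyDisjoint : p.InternallyDisjoint q

theorem IsCyclePair.isCycle {p q : G.Walk u v} (h : p.IsCyclePair q) :
    (p.append q.reverse).IsCycle := by
  obtain ⟨hp, hq, hpq, hd⟩ := h
  refine hp.isCycle_append hq.reverse (fun a hap haq ↦ ?_) ?_
  · grind [InternallyDisjoint, dropLast_support_concat, IsPath.support_nodup, support_reverse,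
      cons_tail_support]
  · grind [length_reverse, eq_of_length_le_one]

theorem IsCyclePair.start_ne_end {p q : G.Walk u v} (h : p.IsCyclePair q) : u ≠ v := by
  rintro rfl
  exact h.ne <| (eq_nil_iff_nil.mpr (isPath_iff_nil.mp h.isPath_left)).trans
    (eq_nil_iff_nil.mpr (isPath_iff_nil.mp h.isPath_right)).symm

theorem IsPath.append_of_forall_eq {p : G.Walk u v} {q : G.Walk v w} (hp : p.IsPath)
    (hq : q.IsPath) (h : ∀ a ∈ p.support, a ∈ q.support → a = v) : (p.append q).IsPath := by
  rw [isPath_def, support_append, List.nodup_append]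
  refine ⟨hp.support_nodup, hq.support_nodup.sublist q.support.tail_sublist, ?_⟩
  rintro a hap _ haq rfl
  have := hq.support_nodup
  rw [← cons_tail_support q, List.nodup_cons] at this
  exact this.1 (h a hap (List.mem_of_mem_tail haq) ▸ haq)

theorem IsPath.isCyclePair_append_reverse {A : G.Walk x z} {S : G.Walk x y} {D : G.Walk z y}
    (hA : A.IsPath) (hS : S.IsPath) (hD : D.IsPath) (hxy : x ≠ y)
    (hAS : ∀ a ∈ A.support, a ∈ S.support → a = x) (hAD : ∀ a ∈ A.support, a ∈ D.support → a = z)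
    (hSD : ∀ a ∈ S.support, a ∈ D.support → a = y) : A.IsCyclePair (S.append D.reverse) := by
  refine ⟨hA, hS.append_of_forall_eq hD.reverse fun a ha hb ↦ hSD a ha (by simpa using hb),
    fun h ↦ hxy (hAS y (h ▸ by simp [mem_support_append_iff]) S.end_mem_support).symm,
    fun a ha hb ↦ ?_⟩
  rcases (mem_support_append_iff _ _).mp hb with hb | hb
  · exact .inl (hAS a ha hb)
  · exact .inr (hAD a ha (by simpa using hb))

theorem IsPath.isCyclePair_toWalk {p : G.Walk x y} (hp : p.IsPath) (h : G.Adj x y)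
    (he : s(x, y) ∉ p.edges) : p.IsCyclePair h.toWalk :=
  ⟨hp, h.isPath_toWalk, by rintro rfl; simp at he, fun a _ ha ↦ by simpa using ha⟩

theorem IsPath.eq_of_mem_support_takeUntil_of_mem_support_dropUntil [DecidableEq V]
    {p : G.Walk u v} (hp : p.IsPath) (hz : z ∈ p.support) {a : V}
    (h₁ : a ∈ (p.takeUntil z hz).support) (h₂ : a ∈ (p.dropUntil z hz).support) : a = z := by
  by_contra hne
  exact (take_spec p hz ▸ hp).ne_of_mem_support_of_append hne h₁ h₂ rfl

theorem IsPath.start_notMem_support_dropUntil [DecidableEq V] {p : G.Walk u v} (hp : p.IsPath)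
    (hz : z ∈ p.support) (hzu : z ≠ u) : u ∉ (p.dropUntil z hz).support := fun h ↦
  hzu (hp.eq_of_mem_support_takeUntil_of_mem_support_dropUntil hz (start_mem_support _) h).symm

theorem InternallyDisjoint.eq_start_of_mem_support_takeUntil [DecidableEq V]
    {p q : G.Walk u v} (hd : p.InternallyDisjoint q) (hp : p.IsPath) (hz : z ∈ p.support)
    (hzv : z ≠ v) {a : V} (ha : a ∈ (p.takeUntil z hz).support) (hq : a ∈ q.support) : a = u :=
  (hd a (p.support_takeUntil_subset_support hz ha) hq).resolve_right <| by
    rintro rfl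
    exact endpoint_notMem_support_takeUntil hp hz hzv.symm ha

theorem InternallyDisjoint.eq_end_of_mem_support_dropUntil [DecidableEq V]
    {p q : G.Walk u v} (hd : p.InternallyDisjoint q) (hp : p.IsPath) (hz : z ∈ p.support)
    (hzu : z ≠ u) {a : V} (ha : a ∈ (p.dropUntil z hz).support) (hq : a ∈ q.support) : a = v :=
  (hd a (p.support_dropUntil_subset_support hz ha) hq).resolve_left <| by
    rintro rfl
    exact hp.start_notMem_support_dropUntil hz hzu ha

theorem exists_mem_support_forall_mem_support_takeUntil [DecidableEq V] {A : Set V}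
    (p : G.Walk u v) (h : ∃ a ∈ p.support, a ∈ A) :
    ∃ z, ∃ hz : z ∈ p.support, z ∈ A ∧ ∀ a ∈ (p.takeUntil z hz).support, a ∈ A → a = z := by
  induction p with
  | nil =>
    obtain ⟨a, ha, haA⟩ := h
    rw [support_nil, List.mem_singleton] at ha
    subst ha
    exact ⟨a, by simp, haA, by simp⟩
  | @cons u' _ _ hadj p ih =>
    by_cases hu : u' ∈ A
    · exact ⟨u', (p.cons hadj).start_mem_support, hu, by simp⟩
    obtain ⟨z, hz, hzA, hmin⟩ := ih (by simpa [hu] using h)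
    refine ⟨z, List.mem_cons_of_mem _ hz, hzA, ?_⟩
    rw [takeUntil_cons hz (ne_of_mem_of_not_mem hzA hu).symm]
    simp only [support_cons, List.mem_cons, forall_eq_or_imp]
    exact ⟨fun h ↦ absurd h hu, hmin⟩

theorem IsCyclePair.split [DecidableEq V] {P Q S : G.Walk x y} (hPS : P.IsCyclePair S)
    (hQS : Q.IsCyclePair S) (hzP : z ∈ P.support) (hzQ : z ∈ Q.support) (hzx : z ≠ x)
    (hzy : z ≠ y)
    (hfirst : ∀ a ∈ (P.takeUntil z hzP).support, a ∈ Q.support → a ≠ x → a ≠ y → a = z) :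
    (P.takeUntil z hzP).IsCyclePair (S.append (Q.dropUntil z hzQ).reverse) ∧
      (Q.takeUntil z hzQ).IsCyclePair (S.append (Q.dropUntil z hzQ).reverse) ∧
      (P.dropUntil z hzP).IsCyclePair ((P.takeUntil z hzP).reverse.append S) ∧
      (Q.dropUntil z hzQ).IsCyclePair ((P.takeUntil z hzP).reverse.append S) := by
  have hxy := hPS.start_ne_end
  obtain ⟨hP, hS, -, dPS⟩ := hPS
  obtain ⟨hQ, -, -, dQS⟩ := hQS
  set P₁ := P.takeUntil z hzP
  set P₂ := P.dropUntil z hzP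
  set Q₁ := Q.takeUntil z hzQ
  set Q₂ := Q.dropUntil z hzQ
  have P₁S : ∀ a ∈ P₁.support, a ∈ S.support → a = x := fun _ ↦
    dPS.eq_start_of_mem_support_takeUntil hP hzP hzy
  have Q₁S : ∀ a ∈ Q₁.support, a ∈ S.support → a = x := fun _ ↦
    dQS.eq_start_of_mem_support_takeUntil hQ hzQ hzy
  have SP₂ : ∀ a ∈ S.support, a ∈ P₂.support → a = y := fun _ h₁ h₂ ↦
    dPS.eq_end_of_mem_support_dropUntil hP hzP hzx h₂ h₁
  have SQ₂ : ∀ a ∈ S.support, a ∈ Q₂.support → a = y := fun _ h₁ h₂ ↦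
    dQS.eq_end_of_mem_support_dropUntil hQ hzQ hzx h₂ h₁
  have P₁P₂ : ∀ a ∈ P₁.support, a ∈ P₂.support → a = z := fun _ ↦
    hP.eq_of_mem_support_takeUntil_of_mem_support_dropUntil hzP
  have Q₁Q₂ : ∀ a ∈ Q₁.support, a ∈ Q₂.support → a = z := fun _ ↦
    hQ.eq_of_mem_support_takeUntil_of_mem_support_dropUntil hzQ
  have P₁Q₂ : ∀ a ∈ P₁.support, a ∈ Q₂.support → a = z := fun a h₁ h₂ ↦
    hfirst a h₁ (Q.support_dropUntil_subset_support hzQ h₂)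
      (by rintro rfl; exact hQ.start_notMem_support_dropUntil hzQ hzx h₂)
      (by rintro rfl; exact endpoint_notMem_support_takeUntil hP hzP hzy.symm h₁)
  have hP₁ : P₁.IsPath := hP.takeUntil hzP
  have hQ₂ : Q₂.IsPath := hQ.dropUntil hzQ
  refine ⟨hP₁.isCyclePair_append_reverse hS hQ₂ hxy P₁S P₁Q₂ SQ₂,
    (hQ.takeUntil hzQ).isCyclePair_append_reverse hS hQ₂ hxy Q₁S Q₁Q₂ SQ₂, ?_, ?_⟩
  · simpa using (hP.dropUntil hzP).isCyclePair_append_reverse hP₁.reverse hS.reverse hzx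
      (fun a h₁ h₂ ↦ P₁P₂ a (by simpa using h₂) h₁) (fun a h₁ h₂ ↦ SP₂ a (by simpa using h₂) h₁)
      (fun a h₁ h₂ ↦ P₁S a (by simpa using h₁) (by simpa using h₂))
  · simpa using hQ₂.isCyclePair_append_reverse hP₁.reverse hS.reverse hzx
      (fun a h₁ h₂ ↦ P₁Q₂ a (by simpa using h₂) h₁) (fun a h₁ h₂ ↦ SQ₂ a (by simpa using h₂) h₁)
      (fun a h₁ h₂ ↦ P₁S a (by simpa using h₁) (by simpa using h₂))

theorem IsCycle.exists_perm_cons_edges_of_mem_darts {c : G.Walk u u} (hc : c.IsCycle)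
    (h : G.Adj x y) (hd : ⟨(x, y), h⟩ ∈ c.darts) :
    ∃ P : G.Walk y x, P.IsPath ∧ c.edges.Perm (s(x, y) :: P.edges) := by
  classical
  have hx : x ∈ c.support := c.dart_fst_mem_support_of_mem_darts hd
  have hc' : (c.rotate x hx).IsCycle := hc.rotate hx
  have hrot := c.rotate_darts x hx
  generalize c.rotate x hx = c' at hrot hc'
  cases c' with
  | nil => exact (not_isCycle_nil hc').elim
  | cons h' t =>
    rw [cons_isCycle_iff] at hc'
    rw [darts_cons] at hrot
    rcases List.mem_cons.mp (hrot.mem_iff.mpr hd) with heq | hdt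
    · cases heq
      exact ⟨t, hc'.1, by simpa [edges] using (hrot.perm.map Dart.edge).symm⟩
    · -- `x` is the last vertex of the path `t`, so no dart of `t` starts at `x`
      have hnd := hc'.1.support_nodup
      rw [← map_fst_darts_append, List.nodup_append] at hnd
      exact absurd rfl (hnd.2.2 _ (List.mem_map_of_mem hdt) x (List.mem_singleton_self x))

theorem IsCycle.exists_perm_cons_edges {c : G.Walk u u} (hc : c.IsCycle)
    (he : s(x, y) ∈ c.edges) :
    ∃ P : G.Walk x y, P.IsPath ∧ s(x, y) ∉ P.edges ∧ c.edges.Perm (s(x, y) :: P.edges) := by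
  suffices ∃ P : G.Walk x y, P.IsPath ∧ c.edges.Perm (s(x, y) :: P.edges) by
    obtain ⟨P, hP, hperm⟩ := this
    exact ⟨P, hP, (List.nodup_cons.mp (hperm.nodup_iff.mp hc.edges_nodup)).1, hperm⟩
  obtain ⟨⟨⟨a, b⟩, h⟩, hd, hde⟩ := List.mem_map.mp he
  rcases Sym2.eq_iff.mp hde with ⟨rfl, rfl⟩ | ⟨rfl, rfl⟩
  · obtain ⟨P, hP, hperm⟩ :=
      hc.reverse.exists_perm_cons_edges_of_mem_darts h.symm (mem_darts_reverse.mpr hd)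
    rw [edges_reverse] at hperm
    exact ⟨P, hP, by simpa [Sym2.eq_swap] using (List.reverse_perm c.edges).symm.trans hperm⟩
  · obtain ⟨P, hP, hperm⟩ := hc.exists_perm_cons_edges_of_mem_darts h hd
    exact ⟨P, hP, by simpa [Sym2.eq_swap] using hperm⟩

section edgeSum

variable {M : Type*} [AddCommMonoid M] (s : Sym2 V → M)

def edgeSum (p : G.Walk u v) : M :=
  (p.edges.map s).sum

@[simp]
theorem edgeSum_append (p : G.Walk u v) (q : G.Walk v w) :
    (p.append q).edgeSum s = p.edgeSum s + q.edgeSum s := by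
  simp [edgeSum]

@[simp]
theorem edgeSum_reverse (p : G.Walk u v) : p.reverse.edgeSum s = p.edgeSum s := by
  simp [edgeSum]

theorem edgeSum_update_of_notMem [DecidableEq (Sym2 V)] {e : Sym2 V} (a : M) {p : G.Walk u v}
    (he : e ∉ p.edges) : p.edgeSum (Function.update s e a) = p.edgeSum s := by
  unfold edgeSum
  congr 1
  exact List.map_congr_left fun e' he' ↦ Function.update_of_ne (ne_of_mem_of_not_mem he' he) _ _

end edgeSum

end SimpleGraph.Walk

namespace SimpleGraph

open Walk

variable {V : Type*} {G : SimpleGraph V} {x y z : V} {B : Set (Set (Sym2 V))}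
  {s : Sym2 V → ZMod 2} {F : Set (Sym2 V)}

def CycleParityOn (G : SimpleGraph V) (B : Set (Set (Sym2 V))) (s : Sym2 V → ZMod 2)
    (F : Set (Sym2 V)) : Prop :=
  ∀ ⦃v : V⦄ ⦃c : G.Walk v v⦄, c.IsCycle → c.edgeSet ⊆ F → c.edgeSum s = B.indicator 1 c.edgeSet

def ThetaEven (G : SimpleGraph V) (B : Set (Set (Sym2 V))) : Prop :=
  ∀ ⦃u v : V⦄ ⦃p₁ p₂ p₃ : G.Walk u v⦄,
    p₁.IsCyclePair p₂ → p₁.IsCyclePair p₃ → p₂.IsCyclePair p₃ →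
    B.indicator 1 (p₁.append p₂.reverse).edgeSet + B.indicator 1 (p₂.append p₃.reverse).edgeSet +
      B.indicator 1 (p₁.append p₃.reverse).edgeSet = (0 : ZMod 2)

/-- The edge sum that `S` must have for the cycle `P ∪ S` to have edge sum `[P ∪ S ∈ B]`. -/
noncomputable def Walk.inducedParity (B : Set (Set (Sym2 V))) (s : Sym2 V → ZMod 2)
    (P S : G.Walk x y) : ZMod 2 :=
  B.indicator 1 (P.append S.reverse).edgeSet + P.edgeSum s

theorem ThetaEven.inducedParity_eq_of_internallyDisjoint (hT : ThetaEven G B)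
    (hs : CycleParityOn G B s F) {P Q S : G.Walk x y} (hPS : P.IsCyclePair S)
    (hQS : Q.IsCyclePair S) (hPF : P.edgeSet ⊆ F) (hQF : Q.edgeSet ⊆ F)
    (hPQ : P.InternallyDisjoint Q) : P.inducedParity B s S = Q.inducedParity B s S := by
  by_cases heq : P = Q
  · rw [heq]
  have hPQ' : P.IsCyclePair Q := ⟨hPS.isPath_left, hQS.isPath_left, heq, hPQ⟩
  have hθ := hT hPQ' hPS hQS
  have hc := hs hPQ'.isCycle (by simpa [edgeSet_append] using ⟨hPF, hQF⟩)
  rw [edgeSum_append, edgeSum_reverse] at hc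
  unfold inducedParity
  grind

theorem inducedParity_append_eq_of_eq (P₁ Q₁ : G.Walk x z) (P₂ Q₂ : G.Walk z y) (S : G.Walk x y)
    (h₁ : P₁.inducedParity B s (S.append Q₂.reverse) = Q₁.inducedParity B s (S.append Q₂.reverse))
    (h₂ : P₂.inducedParity B s (P₁.reverse.append S) = Q₂.inducedParity B s (P₁.reverse.append S)) :
    (P₁.append P₂).inducedParity B s S = (Q₁.append Q₂).inducedParity B s S := by
  simp only [inducedParity, edgeSet_append, edgeSet_reverse, edgeSum_append] at h₁ h₂ ⊢
  have e₁ : P₁.edgeSet ∪ (S.edgeSet ∪ Q₂.edgeSet) = Q₂.edgeSet ∪ (P₁.edgeSet ∪ S.edgeSet) := by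
    ac_rfl
  have e₂ : Q₁.edgeSet ∪ (S.edgeSet ∪ Q₂.edgeSet) = Q₁.edgeSet ∪ Q₂.edgeSet ∪ S.edgeSet := by
    ac_rfl
  have e₃ : P₂.edgeSet ∪ (P₁.edgeSet ∪ S.edgeSet) = P₁.edgeSet ∪ P₂.edgeSet ∪ S.edgeSet := by
    ac_rfl
  rw [e₁, e₂] at h₁
  rw [e₃] at h₂
  grind

theorem ThetaEven.inducedParity_eq (hT : ThetaEven G B) (hs : CycleParityOn G B s F)
    {P Q S : G.Walk x y} (hPS : P.IsCyclePair S) (hQS : Q.IsCyclePair S) (hPF : P.edgeSet ⊆ F)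
    (hQF : Q.edgeSet ⊆ F) : P.inducedParity B s S = Q.inducedParity B s S := by
  classical
  induction hn : P.length + Q.length using Nat.strong_induction_on generalizing x y P Q S with
  | _ n ih =>
  by_cases dPQ : P.InternallyDisjoint Q
  · exact hT.inducedParity_eq_of_internallyDisjoint hs hPS hQS hPF hQF dPQ
  obtain ⟨z, hzP, ⟨hzQ, hzx, hzy⟩, hfirst⟩ :=
    P.exists_mem_support_forall_mem_support_takeUntil (A := {a | a ∈ Q.support ∧ a ≠ x ∧ a ≠ y})
      (by simpa [InternallyDisjoint] using dPQ)
  obtain ⟨c₁, c₂, c₃, c₄⟩ :=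
    hPS.split hQS hzP hzQ hzx hzy fun a h₁ h₂ h₃ h₄ ↦ hfirst a h₁ ⟨h₂, h₃, h₄⟩
  have := P.length_takeUntil_lt_length hzP hzy
  have := P.length_dropUntil_lt_length hzP hzx
  have := Q.length_takeUntil_le_length hzQ
  have := Q.length_dropUntil_le_length hzQ
  rw [← take_spec P hzP, ← take_spec Q hzQ]
  exact inducedParity_append_eq_of_eq _ _ _ _ _
    (ih _ (by omega) c₁ c₂ (fun e he ↦ hPF (P.edges_takeUntil_subset_edges hzP he))
      (fun e he ↦ hQF (Q.edges_takeUntil_subset_edges hzQ he)) rfl)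
    (ih _ (by omega) c₃ c₄ (fun e he ↦ hPF (P.edges_dropUntil_subset_edges hzP he))
      (fun e he ↦ hQF (Q.edges_dropUntil_subset_edges hzQ he)) rfl)

theorem ThetaEven.exists_cycleParityOn_insert (hT : ThetaEven G B) (hs : CycleParityOn G B s F)
    {e : Sym2 V} (he : e ∉ F) : ∃ s', CycleParityOn G B s' (insert e F) := by
  classical
  induction e using Sym2.ind with | _ x y =>
  have decompose ⦃v : V⦄ ⦃c : G.Walk v v⦄ (hc : c.IsCycle) (hcF : c.edgeSet ⊆ insert s(x, y) F)
      (hec : s(x, y) ∈ c.edges) : ∃ P : G.Walk x y, P.IsPath ∧ s(x, y) ∉ P.edges ∧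
        c.edges.Perm (s(x, y) :: P.edges) ∧ P.edgeSet ⊆ F := by
    obtain ⟨P, hP, hnot, hperm⟩ := hc.exists_perm_cons_edges hec
    refine ⟨P, hP, hnot, hperm, fun e' he' ↦ ?_⟩
    exact (hcF (hperm.mem_iff.mpr (List.mem_cons_of_mem _ he'))).resolve_left
      (ne_of_mem_of_not_mem he' hnot)
  by_cases hP₀ : ∃ (h : G.Adj x y) (P₀ : G.Walk x y), P₀.IsPath ∧ P₀.edgeSet ⊆ F
  swap
  · refine ⟨s, fun v c hc hcF ↦ hs hc fun e' he' ↦ (hcF he').resolve_left ?_⟩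
    rintro rfl
    obtain ⟨P, hP, -, -, hPF⟩ := decompose hc hcF he'
    exact hP₀ ⟨c.adj_of_mem_edges he', P, hP, hPF⟩
  obtain ⟨hadj, P₀, hP₀, hP₀F⟩ := hP₀
  refine ⟨Function.update s s(x, y) (P₀.inducedParity B s hadj.toWalk), fun v c hc hcF ↦ ?_⟩
  by_cases hec : s(x, y) ∈ c.edges
  swap
  · rw [edgeSum_update_of_notMem _ _ hec]
    exact hs hc fun e' he' ↦ (hcF he').resolve_left (ne_of_mem_of_not_mem he' hec)
  obtain ⟨P, hP, hnot, hperm, hPF⟩ := decompose hc hcF hec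
  have key := hT.inducedParity_eq hs (hP₀.isCyclePair_toWalk hadj fun h ↦ he (hP₀F h))
    (hP.isCyclePair_toWalk hadj hnot) hP₀F hPF
  have hce : c.edgeSet = (P.append hadj.toWalk.reverse).edgeSet := by
    ext; simp [hperm.mem_iff, or_comm, Sym2.eq_swap]
  rw [edgeSum, (hperm.map _).sum_eq, List.map_cons, List.sum_cons, Function.update_self, ← edgeSum,
    edgeSum_update_of_notMem _ _ hnot, key, hce, inducedParity]
  grind

theorem ThetaEven.exists_cycleParityOn (hT : ThetaEven G B) (hF : F.Finite) :
    ∃ s, CycleParityOn G B s F := by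
  induction F, hF using Set.Finite.induction_on with
  | empty =>
    refine ⟨0, fun v c hc hcF ↦ ?_⟩
    cases c with
    | nil => exact (not_isCycle_nil hc).elim
    | @cons _ a _ h p =>
      exact (Set.notMem_empty _ (hcF (show s(v, a) ∈ (cons h p).edgeSet by simp))).elim
  | insert he _ ih =>
    obtain ⟨s, hs⟩ := ih
    exact hT.exists_cycleParityOn_insert hs he

theorem CycleParityOn.thetaEven (hs : CycleParityOn G B s Set.univ) : ThetaEven G B := by
  intro u v p₁ p₂ p₃ h₁₂ h₁₃ h₂₃
  rw [← hs h₁₂.isCycle (Set.subset_univ _), ← hs h₁₃.isCycle (Set.subset_univ _),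
    ← hs h₂₃.isCycle (Set.subset_univ _)]
  simp only [edgeSum_append, edgeSum_reverse]
  grind

theorem exists_cycleParityOn_univ_iff_thetaEven [Finite V] :
    (∃ s, CycleParityOn G B s Set.univ) ↔ ThetaEven G B :=
  ⟨fun ⟨_, hs⟩ ↦ hs.thetaEven, fun hT ↦ hT.exists_cycleParityOn Set.finite_univ⟩

theorem exists_sign_iff_exists_cycleParityOn_univ :
    (∃ σ : Sym2 V → ℤ, (∀ e ∈ G.edgeSet, σ e = 1 ∨ σ e = -1) ∧
      ∀ (v : V) (c : G.Walk v v), c.IsCycle → ((c.edges.map σ).prod = -1 ↔ c.edgeSet ∈ B)) ↔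
    ∃ s, CycleParityOn G B s Set.univ := by
  constructor
  · rintro ⟨σ, hσ, hB⟩
    refine ⟨fun e ↦ if σ e = -1 then 1 else 0, fun v c hc _ ↦ ?_⟩
    have hσs : c.edges.map σ =
        c.edges.map fun e ↦ (((-1 : ℤˣ) ^ (if σ e = -1 then 1 else 0 : ZMod 2) : ℤˣ) : ℤ) :=
      List.map_congr_left fun e he ↦ by
        rcases hσ e (c.edges_subset_edgeSet he) with h | h <;> simp [h]
    rw [Set.eq_indicator_one_iff, ← hB v c hc, hσs, List.prod_map_neg_one_uzpow,
      neg_one_uzpow_eq_neg_one_iff, edgeSum]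
  · rintro ⟨s, hs⟩
    refine ⟨fun e ↦ (((-1 : ℤˣ) ^ s e : ℤˣ) : ℤ), fun e _ ↦ ?_, fun v c hc ↦ ?_⟩
    · rcases (s e).eq_zero_or_eq_one with h | h <;> simp [h]
    · rw [List.prod_map_neg_one_uzpow, neg_one_uzpow_eq_neg_one_iff, ← Set.eq_indicator_one_iff]
      exact hs hc (Set.subset_univ _)

end SimpleGraph

theorem negative_cycle_classes_general {V : Type*} [Fintype V] (G : SimpleGraph V)
    (B : Set (Set (Sym2 V))) :
    (∃ σ : Sym2 V → ℤ, (∀ e ∈ G.edgeSet, σ e = 1 ∨ σ e = -1) ∧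
        ∀ (v : V) (w : G.Walk v v), w.IsCycle →
          ((w.edges.map σ).prod = -1 ↔ {e | e ∈ w.edges} ∈ B)) ↔
      ∀ (u v : V), u ≠ v → ∀ (p₁ p₂ p₃ : G.Walk u v),
        p₁.IsPath → p₂.IsPath → p₃.IsPath →
        p₁ ≠ p₂ → p₁ ≠ p₃ → p₂ ≠ p₃ →
        (∀ x, x ∈ p₁.support → x ∈ p₂.support → x = u ∨ x = v) →
        (∀ x, x ∈ p₁.support → x ∈ p₃.support → x = u ∨ x = v) →
        (∀ x, x ∈ p₂.support → x ∈ p₃.support → x = u ∨ x = v) →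
        (({e | e ∈ (p₁.append p₂.reverse).edges} ∈ B ∧
            {e | e ∈ (p₂.append p₃.reverse).edges} ∈ B ∧
            {e | e ∈ (p₁.append p₃.reverse).edges} ∉ B) ∨
         ({e | e ∈ (p₁.append p₂.reverse).edges} ∈ B ∧
            {e | e ∈ (p₂.append p₃.reverse).edges} ∉ B ∧
            {e | e ∈ (p₁.append p₃.reverse).edges} ∈ B) ∨
         ({e | e ∈ (p₁.append p₂.reverse).edges} ∉ B ∧
            {e | e ∈ (p₂.append p₃.reverse).edges} ∈ B ∧
            {e | e ∈ (p₁.append p₃.reverse).edges} ∈ B) ∨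
         ({e | e ∈ (p₁.append p₂.reverse).edges} ∉ B ∧
            {e | e ∈ (p₂.append p₃.reverse).edges} ∉ B ∧
            {e | e ∈ (p₁.append p₃.reverse).edges} ∉ B)) := by
  refine (SimpleGraph.exists_sign_iff_exists_cycleParityOn_univ.trans
    SimpleGraph.exists_cycleParityOn_univ_iff_thetaEven).trans ⟨?_, ?_⟩
  · intro hT u v _ p₁ p₂ p₃ h₁ h₂ h₃ h₁₂ h₁₃ h₂₃ d₁₂ d₁₃ d₂₃
    exact (Set.indicator_add_indicator_add_indicator_eq_zero_iff ..).mp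
      (hT ⟨h₁, h₂, h₁₂, d₁₂⟩ ⟨h₁, h₃, h₁₃, d₁₃⟩ ⟨h₂, h₃, h₂₃, d₂₃⟩)
  · intro h u v p₁ p₂ p₃ c₁₂ c₁₃ c₂₃
    exact (Set.indicator_add_indicator_add_indicator_eq_zero_iff ..).mpr
      (h u v c₁₂.start_ne_end p₁ p₂ p₃ c₁₂.isPath_left c₁₂.isPath_right c₁₃.isPath_right
        c₁₂.ne c₁₃.ne c₂₃.ne c₁₂.internallyDisjoint c₁₃.internallyDisjoint c₂₃.internallyDisjoint)

/-- A class `B` of cycles of a graph `G` (cycles being recorded by their edge sets) is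
the class of negative cycles of some signed graph `(G, σ)` iff every theta subgraph of
`G` — the union of three pairwise internally disjoint paths `p₁, p₂, p₃` joining the
same two distinct vertices — contains an even number (0 or 2) of cycles of `B` among
its three cycles `p₁ ∪ p₂`, `p₂ ∪ p₃`, `p₁ ∪ p₃`. -/
theorem negative_cycle_classes {V : Type*} [Fintype V] (G : SimpleGraph V)
    (B : Set (Set (Sym2 V)))
    (hB : ∀ C ∈ B, ∃ (v : V) (w : G.Walk v v), w.IsCycle ∧ C = {e | e ∈ w.edges}) :
    (∃ σ : Sym2 V → ℤ, (∀ e ∈ G.edgeSet, σ e = 1 ∨ σ e = -1) ∧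
        ∀ (v : V) (w : G.Walk v v), w.IsCycle →
          ((w.edges.map σ).prod = -1 ↔ {e | e ∈ w.edges} ∈ B)) ↔
      ∀ (u v : V), u ≠ v → ∀ (p₁ p₂ p₃ : G.Walk u v),
        p₁.IsPath → p₂.IsPath → p₃.IsPath →
        p₁ ≠ p₂ → p₁ ≠ p₃ → p₂ ≠ p₃ →
        (∀ x, x ∈ p₁.support → x ∈ p₂.support → x = u ∨ x = v) →
        (∀ x, x ∈ p₁.support → x ∈ p₃.support → x = u ∨ x = v) →
        (∀ x, x ∈ p₂.support → x ∈ p₃.support → x = u ∨ x = v) →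
        (({e | e ∈ (p₁.append p₂.reverse).edges} ∈ B ∧
            {e | e ∈ (p₂.append p₃.reverse).edges} ∈ B ∧
            {e | e ∈ (p₁.append p₃.reverse).edges} ∉ B) ∨
         ({e | e ∈ (p₁.append p₂.reverse).edges} ∈ B ∧
            {e | e ∈ (p₂.append p₃.reverse).edges} ∉ B ∧
            {e | e ∈ (p₁.append p₃.reverse).edges} ∈ B) ∨
         ({e | e ∈ (p₁.append p₂.reverse).edges} ∉ B ∧
            {e | e ∈ (p₂.append p₃.reverse).edges} ∈ B ∧
            {e | e ∈ (p₁.append p₃.reverse).edges} ∈ B) ∨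
         ({e | e ∈ (p₁.append p₂.reverse).edges} ∉ B ∧
            {e | e ∈ (p₂.append p₃.reverse).edges} ∉ B ∧
            {e | e ∈ (p₁.append p₃.reverse).edges} ∉ B)) :=
  negative_cycle_classes_general G B
end

section
/- If the underlying graph Γ of a signed simple graph Σ is regular of degree k, then every eigenvalue of the adjacency matrix A(Σ) is at most k, and k is an eigenvalue of A(Σ) with multiplicity exactly b(Σ); in particular, k is an eigenvalue of A(Σ) if and only if Σ has a balanced connected component. -/
/-!
Since `σ(ij)² = 1`, summing `(x j - σ(ij) x i)²` over all ordered pairs of adjacent vertices of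
a `k`-regular graph gives `2 (k ⟪x, x⟫ - ⟪x, A x⟫)`. This quadratic form is nonnegative, so every
eigenvalue is at most `k`, and it vanishes exactly on the vectors with `x j = σ(ij) x i` along
every edge, which form the `k`-eigenspace. Such a vector is determined on each component by its
value at one vertex, transported along walks by their signs. A negative cycle forces it to vanish
on its component; on a balanced component every closed walk is positive (shortcut it to a path,
each shortcut removing a positive cycle or a backtrack), so any value at the chosen vertex extends.
Hence the `k`-eigenspace is isomorphic to `ℝ ^ b(Σ)`.
-/

open SimpleGraph
open scoped Classical

/-- The adjacency matrix of the signed simple graph `(G, σ)`. -/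
noncomputable def signedAdj {V : Type*} [Fintype V] (G : SimpleGraph V)
    (σ : Sym2 V → ℤ) : Matrix V V ℝ :=
  Matrix.of fun i j => if G.Adj i j then (σ s(i, j) : ℝ) else 0

/-- `b(Σ)`: the number of connected components of `G` on which `Σ` restricts to a
balanced signed graph (every cycle in the component has sign `+1`). -/
noncomputable def numBalancedComponents {V : Type*} (G : SimpleGraph V)
    (σ : Sym2 V → ℤ) : ℕ :=
  Nat.card {c : G.ConnectedComponent //
    ∀ (v : V) (w : G.Walk v v), G.connectedComponentMk v = c → w.IsCycle →
      (w.edges.map σ).prod = 1}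

section Walks

variable {V : Type*} {G : SimpleGraph V} {σ : Sym2 V → ℤ}

def IsSigning (G : SimpleGraph V) (σ : Sym2 V → ℤ) : Prop :=
  ∀ e ∈ G.edgeSet, σ e = 1 ∨ σ e = -1

def walkSign (σ : Sym2 V → ℤ) {u v : V} (p : G.Walk u v) : ℤ :=
  (p.edges.map σ).prod

def IsBalancedComponent (G : SimpleGraph V) (σ : Sym2 V → ℤ) (c : G.ConnectedComponent) :
    Prop :=
  ∀ (v : V) (w : G.Walk v v), G.connectedComponentMk v = c → w.IsCycle → walkSign σ w = 1

@[simp] lemma walkSign_nil {u : V} : walkSign σ (Walk.nil : G.Walk u u) = 1 := rfl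

@[simp] lemma walkSign_cons {u v w : V} (h : G.Adj u v) (p : G.Walk v w) :
    walkSign σ (Walk.cons h p) = σ s(u, v) * walkSign σ p := by
  simp [walkSign]

@[simp] lemma walkSign_append {u v w : V} (p : G.Walk u v) (q : G.Walk v w) :
    walkSign σ (p.append q) = walkSign σ p * walkSign σ q := by
  simp [walkSign]

@[simp] lemma walkSign_reverse {u v : V} (p : G.Walk u v) :
    walkSign σ p.reverse = walkSign σ p := by
  simp [walkSign, List.prod_reverse]

@[simp] lemma walkSign_concat {u v w : V} (p : G.Walk u v) (h : G.Adj v w) :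
    walkSign σ (p.concat h) = walkSign σ p * σ s(v, w) := by
  simp [Walk.concat_eq_append]

lemma IsSigning.mul_self {e : Sym2 V} (hσ : IsSigning G σ) (he : e ∈ G.edgeSet) :
    σ e * σ e = 1 := by
  rcases hσ e he with h | h <;> simp [h]

lemma IsSigning.cast_mul_self (hσ : IsSigning G σ) {i j : V} (h : G.Adj i j) :
    (σ s(i, j) : ℝ) * σ s(i, j) = 1 := by
  exact_mod_cast hσ.mul_self h

lemma IsSigning.walkSign_mul_self (hσ : IsSigning G σ) {u v : V} (p : G.Walk u v) :
    walkSign σ p * walkSign σ p = 1 := by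
  induction p with
  | nil => rfl
  | cons h p ih =>
    rw [walkSign_cons, mul_mul_mul_comm, hσ.mul_self h, ih, one_mul]

variable {c : G.ConnectedComponent}

lemma IsBalancedComponent.walkSign_cons_of_isPath (hσ : IsSigning G σ)
    (hc : IsBalancedComponent G σ c) {u v : V} (hu : G.connectedComponentMk u = c)
    (h : G.Adj u v) {q : G.Walk v u} (hq : q.IsPath) :
    walkSign σ (Walk.cons h q) = 1 := by
  by_cases huv : s(u, v) ∈ q.edges
  · -- a path from `v` to `u` through the edge `uv` is that edge, so this is a backtrack
    rw [Sym2.eq_swap] at huv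
    rw [hq.eq_adj_toWalk_of_mem_edges huv]
    simpa [Adj.toWalk, Sym2.eq_swap] using hσ.mul_self h
  · exact hc u _ hu ((Walk.cons_isCycle_iff q h).mpr ⟨hq, huv⟩)

lemma IsBalancedComponent.walkSign_bypass (hσ : IsSigning G σ)
    (hc : IsBalancedComponent G σ c) {u v : V} (hu : G.connectedComponentMk u = c)
    (p : G.Walk u v) : walkSign σ p.bypass = walkSign σ p := by
  induction p with
  | nil => rfl
  | @cons u w v h p ih =>
    have hw : G.connectedComponentMk w = c :=
      (ConnectedComponent.connectedComponentMk_eq_of_adj h).symm.trans hu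
    rw [Walk.bypass]
    split_ifs with hs
    · have hq := p.bypass_isPath.takeUntil hs
      rw [walkSign_cons, ← ih hw]
      conv_rhs => rw [← p.bypass.take_spec hs]
      rw [walkSign_append, ← mul_assoc, ← walkSign_cons h, hc.walkSign_cons_of_isPath hσ hu h hq,
        one_mul]
    · rw [walkSign_cons, walkSign_cons, ih hw]

lemma IsBalancedComponent.walkSign_eq_one (hσ : IsSigning G σ)
    (hc : IsBalancedComponent G σ c) {u : V} (hu : G.connectedComponentMk u = c)
    (p : G.Walk u u) : walkSign σ p = 1 := by
  rw [← hc.walkSign_bypass hσ hu, (Walk.isPath_iff_nil.mp p.bypass_isPath).eq_nil, walkSign_nil]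

lemma IsBalancedComponent.walkSign_eq (hσ : IsSigning G σ)
    (hc : IsBalancedComponent G σ c) {u v : V} (hu : G.connectedComponentMk u = c)
    (p q : G.Walk u v) : walkSign σ p = walkSign σ q := by
  have h := hc.walkSign_eq_one hσ hu (p.append q.reverse)
  rw [walkSign_append, walkSign_reverse] at h
  calc walkSign σ p = walkSign σ p * (walkSign σ q * walkSign σ q) := by
        rw [hσ.walkSign_mul_self, mul_one]
    _ = walkSign σ q := by rw [← mul_assoc, h, one_mul]

end Walks

section SignConsistent

variable {V : Type*} {G : SimpleGraph V} {σ : Sym2 V → ℤ}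

def signConsistent (G : SimpleGraph V) (σ : Sym2 V → ℤ) : Submodule ℝ (V → ℝ) where
  carrier := {x | ∀ i j, G.Adj i j → x j = σ s(i, j) * x i}
  zero_mem' := by simp
  add_mem' hx hy i j h := by simp [hx i j h, hy i j h, mul_add]
  smul_mem' a x hx i j h := by simp [hx i j h, mul_left_comm]

lemma apply_eq_walkSign_mul {x : V → ℝ} (hx : x ∈ signConsistent G σ) {u v : V}
    (p : G.Walk u v) : x v = walkSign σ p * x u := by
  induction p with
  | nil => simp
  | cons h p ih => rw [ih, hx _ _ h, walkSign_cons]; push_cast; ring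

lemma apply_eq_zero_of_not_isBalancedComponent (hσ : IsSigning G σ) {x : V → ℝ}
    (hx : x ∈ signConsistent G σ) {v : V}
    (hv : ¬ IsBalancedComponent G σ (G.connectedComponentMk v)) : x v = 0 := by
  obtain ⟨u, w, hu, -, hw⟩ : ∃ (u : V) (w : G.Walk u u),
      G.connectedComponentMk u = G.connectedComponentMk v ∧ w.IsCycle ∧ walkSign σ w ≠ 1 := by
    simpa [IsBalancedComponent] using hv
  have hw : walkSign σ w = -1 :=
    (mul_self_eq_one_iff.mp (hσ.walkSign_mul_self w)).resolve_left hw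
  have hxu : x u = 0 := by
    have := apply_eq_walkSign_mul hx w
    rw [hw] at this
    push_cast at this
    linarith
  obtain ⟨p⟩ := ConnectedComponent.exact hu
  rw [apply_eq_walkSign_mul hx p, hxu, mul_zero]

noncomputable def rootSign (G : SimpleGraph V) (σ : Sym2 V → ℤ) (v : V) : ℤ :=
  walkSign σ (ConnectedComponent.exact (G.connectedComponentMk v).out_eq).some

lemma IsBalancedComponent.rootSign_eq (hσ : IsSigning G σ) {c : G.ConnectedComponent}
    (hc : IsBalancedComponent G σ c) {v : V} (hv : G.connectedComponentMk v = c)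
    (p : G.Walk c.out v) : rootSign G σ v = walkSign σ p := by
  subst hv
  exact hc.walkSign_eq hσ (Quot.out_eq _) _ _

lemma IsBalancedComponent.rootSign_out (hσ : IsSigning G σ) {c : G.ConnectedComponent}
    (hc : IsBalancedComponent G σ c) : rootSign G σ c.out = 1 :=
  hc.rootSign_eq hσ c.out_eq Walk.nil

lemma IsBalancedComponent.rootSign_adj (hσ : IsSigning G σ) {i j : V}
    (hc : IsBalancedComponent G σ (G.connectedComponentMk i)) (h : G.Adj i j) :
    rootSign G σ j = σ s(i, j) * rootSign G σ i := by
  rw [hc.rootSign_eq hσ (ConnectedComponent.connectedComponentMk_eq_of_adj h).symm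
      ((ConnectedComponent.exact (G.connectedComponentMk i).out_eq).some.concat h),
    walkSign_concat, mul_comm]
  rfl

noncomputable def liftFromRoots (G : SimpleGraph V) (σ : Sym2 V → ℤ)
    (T : G.ConnectedComponent → ℝ) (v : V) : ℝ :=
  rootSign G σ v * T (G.connectedComponentMk v)

lemma liftFromRoots_mem (hσ : IsSigning G σ) {T : G.ConnectedComponent → ℝ}
    (hT : ∀ c, ¬ IsBalancedComponent G σ c → T c = 0) :
    liftFromRoots G σ T ∈ signConsistent G σ := by
  intro i j h
  have hmk : G.connectedComponentMk j = G.connectedComponentMk i :=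
    (ConnectedComponent.connectedComponentMk_eq_of_adj h).symm
  simp only [liftFromRoots, hmk]
  by_cases hc : IsBalancedComponent G σ (G.connectedComponentMk i)
  · rw [hc.rootSign_adj hσ h]; push_cast; ring
  · simp [hT _ hc]

lemma IsBalancedComponent.liftFromRoots_out (hσ : IsSigning G σ) {c : G.ConnectedComponent}
    (hc : IsBalancedComponent G σ c) (T : G.ConnectedComponent → ℝ) :
    liftFromRoots G σ T c.out = T c := by
  rw [liftFromRoots, hc.rootSign_out hσ, Int.cast_one, one_mul]
  exact congrArg T c.out_eq

noncomputable def restrictToRoots (G : SimpleGraph V) (σ : Sym2 V → ℤ) :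
    signConsistent G σ →ₗ[ℝ] ({c : G.ConnectedComponent // IsBalancedComponent G σ c} → ℝ) where
  toFun x c := (x : V → ℝ) c.1.out
  map_add' _ _ := rfl
  map_smul' _ _ := rfl

lemma restrictToRoots_bijective (hσ : IsSigning G σ) :
    Function.Bijective (restrictToRoots G σ) := by
  constructor
  · rw [injective_iff_map_eq_zero]
    rintro ⟨x, hx⟩ h0
    ext v
    by_cases hc : IsBalancedComponent G σ (G.connectedComponentMk v)
    · obtain ⟨p⟩ := ConnectedComponent.exact (G.connectedComponentMk v).out_eq
      have : x (G.connectedComponentMk v).out = 0 := congrFun h0 ⟨_, hc⟩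
      simp [apply_eq_walkSign_mul hx p, this]
    · exact apply_eq_zero_of_not_isBalancedComponent hσ hx hc
  · intro t
    let T c : ℝ := if hc : IsBalancedComponent G σ c then t ⟨c, hc⟩ else 0
    refine ⟨⟨liftFromRoots G σ T, liftFromRoots_mem hσ fun c hc => dif_neg hc⟩, ?_⟩
    funext c
    exact (c.2.liftFromRoots_out hσ T).trans (dif_pos c.2)

theorem finrank_signConsistent [Finite V] (hσ : IsSigning G σ) :
    Module.finrank ℝ (signConsistent G σ) = numBalancedComponents G σ := by
  have := Fintype.ofFinite {c : G.ConnectedComponent // IsBalancedComponent G σ c}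
  rw [(LinearEquiv.ofBijective _ (restrictToRoots_bijective hσ)).finrank_eq,
    Module.finrank_fintype_fun_eq_card, ← Nat.card_eq_fintype_card]
  rfl

end SignConsistent

section Eigen

open Matrix Finset

variable {V : Type*} [Fintype V] {G : SimpleGraph V} [DecidableRel G.Adj] {σ : Sym2 V → ℤ}
  {k : ℕ}

lemma signedAdj_mulVec_apply (x : V → ℝ) (i : V) :
    (signedAdj G σ *ᵥ x) i = ∑ j ∈ G.neighborFinset i, σ s(i, j) * x j := by
  simp [mulVec, dotProduct, signedAdj, neighborFinset_eq_filter, sum_filter]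

lemma SimpleGraph.IsRegularOfDegree.sum_sum_neighborFinset (hreg : G.IsRegularOfDegree k)
    (f : V → ℝ) :
    ∑ i, ∑ j ∈ G.neighborFinset i, f j = k * ∑ i, f i := by
  calc ∑ i, ∑ j ∈ G.neighborFinset i, f j = ∑ j, ∑ i ∈ G.neighborFinset j, f j := by
        simp only [neighborFinset_eq_filter, sum_filter]
        rw [sum_comm]
        simp only [G.adj_comm]
    _ = k * ∑ i, f i := by
        simp [mul_sum, card_neighborFinset_eq_degree, hreg _]

lemma sum_neighborFinset_sq_sub_eq (hσ : IsSigning G σ) (hreg : G.IsRegularOfDegree k)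
    (x : V → ℝ) :
    ∑ i, ∑ j ∈ G.neighborFinset i, (x j - σ s(i, j) * x i) ^ 2 =
      2 * (k * (x ⬝ᵥ x) - x ⬝ᵥ (signedAdj G σ *ᵥ x)) := by
  have hterm : ∀ i, ∀ j ∈ G.neighborFinset i,
      (x j - σ s(i, j) * x i) ^ 2 = x j * x j + x i * x i - 2 * (x i * (σ s(i, j) * x j)) := by
    intro i j hj
    linear_combination (x i) ^ 2 * hσ.cast_mul_self ((G.mem_neighborFinset i j).mp hj)
  rw [sum_congr rfl fun i _ => sum_congr rfl (hterm i)]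
  simp only [sum_sub_distrib, sum_add_distrib, ← mul_sum, sum_const,
    card_neighborFinset_eq_degree, hreg _, hreg.sum_sum_neighborFinset, dotProduct,
    signedAdj_mulVec_apply]
  simp only [nsmul_eq_mul, mul_left_comm (x _) (k : ℝ), ← mul_sum]
  ring

lemma eigenvalue_le_of_isRegularOfDegree (hσ : IsSigning G σ) (hreg : G.IsRegularOfDegree k)
    {μ : ℝ} (hμ : Module.End.HasEigenvalue (signedAdj G σ).mulVecLin μ) : μ ≤ k := by
  obtain ⟨x, hx⟩ := hμ.exists_hasEigenvector
  have hAx : signedAdj G σ *ᵥ x = μ • x := hx.apply_eq_smul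
  have hx0 : 0 < x ⬝ᵥ x :=
    lt_of_le_of_ne (Finset.sum_nonneg fun i _ => mul_self_nonneg (x i))
      (Ne.symm (dotProduct_self_eq_zero.not.mpr hx.2))
  have hsq : 0 ≤ 2 * (k * (x ⬝ᵥ x) - x ⬝ᵥ (signedAdj G σ *ᵥ x)) := by
    rw [← sum_neighborFinset_sq_sub_eq hσ hreg]
    positivity
  rw [hAx, dotProduct_smul, smul_eq_mul] at hsq
  nlinarith

lemma eigenspace_signedAdj_eq_signConsistent (hσ : IsSigning G σ)
    (hreg : G.IsRegularOfDegree k) :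
    Module.End.eigenspace (signedAdj G σ).mulVecLin k = signConsistent G σ := by
  ext x
  rw [Module.End.mem_eigenspace_iff, mulVecLin_apply]
  constructor
  · intro hx i j h
    have h0 := sum_neighborFinset_sq_sub_eq hσ hreg x
    rw [hx, dotProduct_smul, smul_eq_mul, sub_self, mul_zero,
      sum_eq_zero_iff_of_nonneg fun i _ => sum_nonneg fun j _ => sq_nonneg _] at h0
    have := (sum_eq_zero_iff_of_nonneg fun j _ => sq_nonneg _).mp (h0 i (mem_univ i)) j
      ((G.mem_neighborFinset i j).mpr h)
    rwa [sq_eq_zero_iff, sub_eq_zero] at this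
  · intro hx
    funext i
    have hterm : ∀ j ∈ G.neighborFinset i, (σ s(i, j) : ℝ) * x j = x i := by
      intro j hj
      have h := (G.mem_neighborFinset i j).mp hj
      rw [hx i j h, ← mul_assoc, hσ.cast_mul_self h, one_mul]
    rw [signedAdj_mulVec_apply, sum_congr rfl hterm, sum_const, card_neighborFinset_eq_degree,
      hreg i, Pi.smul_apply, nsmul_eq_mul, smul_eq_mul]

end Eigen

theorem regular_eigenvalue_bound_general {V : Type*} [Fintype V]
    (G : SimpleGraph V) [DecidableRel G.Adj]
    (σ : Sym2 V → ℤ) (hσ : ∀ e ∈ G.edgeSet, σ e = 1 ∨ σ e = -1)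
    (k : ℕ) (hreg : G.IsRegularOfDegree k) :
    (∀ μ : ℝ, Module.End.HasEigenvalue (signedAdj G σ).mulVecLin μ → μ ≤ k) ∧
    Module.finrank ℝ (Module.End.eigenspace (signedAdj G σ).mulVecLin (k : ℝ)) =
      numBalancedComponents G σ ∧
    (Module.End.HasEigenvalue (signedAdj G σ).mulVecLin (k : ℝ) ↔
      ∃ c : G.ConnectedComponent,
        ∀ (v : V) (w : G.Walk v v), G.connectedComponentMk v = c → w.IsCycle →
          (w.edges.map σ).prod = 1) := by
  have hdim : Module.finrank ℝ (Module.End.eigenspace (signedAdj G σ).mulVecLin (k : ℝ)) =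
      numBalancedComponents G σ := by
    rw [eigenspace_signedAdj_eq_signConsistent hσ hreg, finrank_signConsistent hσ]
  refine ⟨fun μ => eigenvalue_le_of_isRegularOfDegree hσ hreg, hdim, ?_⟩
  rw [Module.End.hasEigenvalue_iff, Ne, ← Submodule.finrank_eq_zero, hdim,
    numBalancedComponents, Nat.card_eq_zero, not_or, not_isEmpty_iff, not_infinite_iff_finite,
    nonempty_subtype]
  exact and_iff_left (Finite.of_fintype _)

/-- If the underlying graph of `Σ` is regular of degree `k`, then every eigenvalue of
`A(Σ)` is at most `k`, the eigenvalue `k` has multiplicity exactly `b(Σ)` (the dimension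
of its eigenspace), and in particular `k` is an eigenvalue of `A(Σ)` iff `Σ` has a
balanced connected component. -/
theorem regular_eigenvalue_bound {V : Type*} [Fintype V] [DecidableEq V]
    (G : SimpleGraph V) [DecidableRel G.Adj]
    (σ : Sym2 V → ℤ) (hσ : ∀ e ∈ G.edgeSet, σ e = 1 ∨ σ e = -1)
    (k : ℕ) (hreg : G.IsRegularOfDegree k) :
    (∀ μ : ℝ, Module.End.HasEigenvalue (signedAdj G σ).mulVecLin μ → μ ≤ k) ∧
    Module.finrank ℝ (Module.End.eigenspace (signedAdj G σ).mulVecLin (k : ℝ)) =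
      numBalancedComponents G σ ∧
    (Module.End.HasEigenvalue (signedAdj G σ).mulVecLin (k : ℝ) ↔
      ∃ c : G.ConnectedComponent,
        ∀ (v : V) (w : G.Walk v v), G.connectedComponentMk v = c → w.IsCycle →
          (w.edges.map σ).prod = 1) :=
  regular_eigenvalue_bound_general G σ hσ k hreg
end

section
/- For a signed simple graph Σ on n vertices, the largest eigenvalue of the Kirchhoff matrix satisfies λ¹(K(Σ)) ≤ 2(n − 1), with equality if and only if Σ is switching equivalent to −K_n, the complete graph on n vertices with all edges signed −1 (i.e., the underlying graph is complete and there exists θ : V → {+1, −1} with σ(vw) = −θ(v)θ(w) for every edge). -/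
open SimpleGraph Matrix
open scoped Classical
set_option linter.unusedSectionVars false

/-- The Kirchhoff matrix `K(Σ) = D(G) - A(Σ)`, where `D(G)` is the diagonal matrix of
vertex degrees of the underlying graph. -/
noncomputable def kirchhoff {V : Type*} [Fintype V] [DecidableEq V]
    (G : SimpleGraph V) (σ : Sym2 V → ℤ) : Matrix V V ℝ :=
  Matrix.diagonal (fun v => (Nat.card (G.neighborSet v) : ℝ)) - signedAdj G σ

/-- The largest eigenvalue of a (real symmetric) matrix. -/
noncomputable def maxEigen {V : Type*} [Fintype V] (M : Matrix V V ℝ) : ℝ :=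
  sSup {μ : ℝ | Module.End.HasEigenvalue M.mulVecLin μ}

section Aux
variable {V : Type*} [Fintype V] [DecidableEq V] (G : SimpleGraph V) (σ : Sym2 V → ℤ)

lemma natCard_neighborSet (v : V) :
    (Nat.card (G.neighborSet v) : ℝ) = (G.degree v : ℝ) := by
  rw [Nat.card_eq_fintype_card, SimpleGraph.card_neighborSet_eq_degree]

lemma kirchhoff_isHermitian : (kirchhoff G σ).IsHermitian := by
  ext i j
  simp only [kirchhoff, signedAdj, Matrix.conjTranspose_apply, Matrix.sub_apply,
    Matrix.diagonal_apply, Matrix.of_apply, star_trivial]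
  by_cases h : G.Adj i j
  · simp [h, h.symm, h.ne, h.ne', Sym2.eq_swap (a := j) (b := i)]
  · have h' : ¬ G.Adj j i := fun hh => h hh.symm
    by_cases hij : i = j
    · simp [h, h', hij]
    · simp [h, h', hij, Ne.symm hij]

lemma kirchhoff_mulVec (x : V → ℝ) (v : V) :
    (kirchhoff G σ *ᵥ x) v
      = (G.degree v : ℝ) * x v - ∑ w ∈ G.neighborFinset v, (σ s(v, w) : ℝ) * x w := by
  have h1 : (signedAdj G σ *ᵥ x) v = ∑ w ∈ G.neighborFinset v, (σ s(v, w) : ℝ) * x w := by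
    rw [SimpleGraph.neighborFinset_eq_filter, Finset.sum_filter]
    simp only [Matrix.mulVec, dotProduct, signedAdj, Matrix.of_apply, ite_mul, zero_mul]
  simp only [kirchhoff, Matrix.sub_mulVec, Pi.sub_apply, Matrix.mulVec_diagonal,
    natCard_neighborSet, h1]


lemma sigma_abs {v w : V} (hσ : ∀ e ∈ G.edgeSet, σ e = 1 ∨ σ e = -1)
    (h : G.Adj v w) : |(σ s(v, w) : ℝ)| = 1 := by
  rcases hσ _ (G.mem_edgeSet.2 h) with h1 | h1 <;> simp [h1]

lemma sigma_sq {v w : V} (hσ : ∀ e ∈ G.edgeSet, σ e = 1 ∨ σ e = -1)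
    (h : G.Adj v w) : (σ s(v, w) : ℝ) * (σ s(v, w) : ℝ) = 1 := by
  rcases hσ _ (G.mem_edgeSet.2 h) with h1 | h1 <;> simp [h1]

/-- Key propagation lemma at a vertex of maximal `|x|`. -/
lemma key_lemma (hσ : ∀ e ∈ G.edgeSet, σ e = 1 ∨ σ e = -1) (x : V → ℝ)
    (hx : kirchhoff G σ *ᵥ x = (2 * ((Fintype.card V : ℝ) - 1)) • x)
    (v : V) (hv : ∀ w, |x w| ≤ |x v|) (hvpos : 0 < |x v|) :
    (∀ w, w ≠ v → G.Adj v w) ∧ ∀ w, G.Adj v w → x w = -(σ s(v, w) : ℝ) * x v := by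
  set n : ℝ := (Fintype.card V : ℝ) with hn
  set d : ℕ := G.degree v with hd
  set N := G.neighborFinset v with hN
  set M : ℝ := |x v| with hM
  have eq1 : (d : ℝ) * x v - ∑ w ∈ N, (σ s(v, w) : ℝ) * x w = 2 * (n - 1) * x v := by
    have := congrFun hx v
    rwa [kirchhoff_mulVec, Pi.smul_apply, smul_eq_mul] at this
  set ε : ℝ := if 0 ≤ x v then 1 else -1 with hε
  have hεxv : ε * x v = M := by
    rw [hε]; split
    · rw [one_mul, hM, abs_of_nonneg ‹_›]
    · rw [hM, abs_of_neg (lt_of_not_ge ‹_›)]; ring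
  have hε2 : ε * ε = 1 := by rw [hε]; split <;> norm_num
  set f : V → ℝ := fun w => ε * (-((σ s(v, w) : ℝ) * x w)) with hf
  have hsum : ∑ w ∈ N, f w = (2 * (n - 1) - d) * M := by
    have hneg : ∑ w ∈ N, -((σ s(v, w) : ℝ) * x w) = (2 * (n - 1) - (d : ℝ)) * x v := by
      rw [Finset.sum_neg_distrib]; linarith
    calc ∑ w ∈ N, f w = ε * ∑ w ∈ N, -((σ s(v, w) : ℝ) * x w) := by rw [Finset.mul_sum]
      _ = ε * ((2 * (n - 1) - d) * x v) := by rw [hneg]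
      _ = (2 * (n - 1) - d) * (ε * x v) := by ring
      _ = (2 * (n - 1) - d) * M := by rw [hεxv]
  have hfle : ∀ w ∈ N, f w ≤ M := by
    intro w hw
    have hadj : G.Adj v w := (G.mem_neighborFinset _ _).1 hw
    calc f w ≤ |f w| := le_abs_self _
      _ = |ε| * (|(σ s(v, w) : ℝ)| * |x w|) := by rw [hf]; rw [abs_mul, abs_neg, abs_mul]
      _ ≤ 1 * (1 * M) := by
          have h1 : |ε| = 1 := by rw [hε]; split <;> norm_num
          rw [h1, sigma_abs G σ hσ hadj]
          have := hv w
          nlinarith [abs_nonneg (x w)]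
      _ = M := by ring
  have hcard : N.card = d := (G.card_neighborFinset_eq_degree v).symm ▸ rfl
  have hsumle : ∑ w ∈ N, f w ≤ (d : ℝ) * M := by
    calc ∑ w ∈ N, f w ≤ N.card • M := Finset.sum_le_card_nsmul N f M hfle
      _ = (d : ℝ) * M := by rw [hcard, nsmul_eq_mul]
  have hdlt : d < Fintype.card V := G.degree_lt_card_verts v
  have hdltR : (d : ℝ) < n := by rw [hn]; exact_mod_cast hdlt
  have hdn : (d : ℝ) = n - 1 := by
    have h1 : 2 * (n - 1) - d ≤ d := by
      have := hsum ▸ hsumle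
      nlinarith [hvpos]
    have h2 : (d : ℝ) ≤ n - 1 := by
      have : (d : ℝ) + 1 ≤ n := by
        rw [hn]; exact_mod_cast hdlt
      linarith
    linarith
  have hNfull : N = Finset.univ.erase v := by
    apply Finset.eq_of_subset_of_card_le
    · intro w hw
      exact Finset.mem_erase.2 ⟨((G.mem_neighborFinset _ _).1 hw).ne', Finset.mem_univ w⟩
    · rw [Finset.card_erase_of_mem (Finset.mem_univ v), Finset.card_univ, hcard]
      have hc : (d : ℝ) = ((Fintype.card V - 1 : ℕ) : ℝ) := by
        rw [hdn, hn, Nat.cast_sub (Fintype.card_pos_iff.2 ⟨v⟩)]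
        norm_num
      have hdd : d = Fintype.card V - 1 := by exact_mod_cast hc
      omega
  have hε0 : ε ≠ 0 := by
    intro h; rw [h] at hε2; norm_num at hε2
  constructor
  · intro w hw
    have hmem : w ∈ N := by
      rw [hNfull]; exact Finset.mem_erase.2 ⟨hw, Finset.mem_univ w⟩
    exact (G.mem_neighborFinset _ _).1 hmem
  · intro w hadj
    have hwN : w ∈ N := (G.mem_neighborFinset _ _).2 hadj
    have hfeq : ∀ u ∈ N, f u = M := by
      intro u hu
      by_contra hne
      have hlt : f u < M := lt_of_le_of_ne (hfle u hu) hne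
      have hstrict : ∑ w ∈ N, f w < ∑ _w ∈ N, M :=
        Finset.sum_lt_sum hfle ⟨u, hu, hlt⟩
      rw [Finset.sum_const, hcard, nsmul_eq_mul, hsum] at hstrict
      nlinarith [hvpos]
    have h1 : f w = M := hfeq w hwN
    have h2 : -((σ s(v, w) : ℝ) * x w) = x v := by
      have h3 : ε * -((σ s(v, w) : ℝ) * x w) = ε * x v := by
        rw [← hεxv] at h1; exact h1
      exact mul_left_cancel₀ hε0 h3
    have hsq := sigma_sq G σ hσ hadj
    linear_combination (-(σ s(v, w) : ℝ)) * h2 - (x w) * hsq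


lemma eigenvalue_le [Nonempty V] (hσ : ∀ e ∈ G.edgeSet, σ e = 1 ∨ σ e = -1) {μ : ℝ}
    (hμ : Module.End.HasEigenvalue (kirchhoff G σ).mulVecLin μ) :
    μ ≤ 2 * ((Fintype.card V : ℝ) - 1) := by
  obtain ⟨x, hx1, hx0⟩ := hμ.exists_hasEigenvector
  have hx : kirchhoff G σ *ᵥ x = μ • x := by
    have := Module.End.mem_eigenspace_iff.1 hx1
    rwa [Matrix.mulVecLin_apply] at this
  obtain ⟨i, -, hi⟩ := Finset.exists_max_image Finset.univ (fun w => |x w|) Finset.univ_nonempty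
  have hi' : ∀ w, |x w| ≤ |x i| := fun w => hi w (Finset.mem_univ w)
  have hipos : 0 < |x i| := by
    obtain ⟨w, hw⟩ := Function.ne_iff.1 hx0
    exact lt_of_lt_of_le (abs_pos.2 hw) (hi' w)
  set M : ℝ := |x i| with hM
  set d : ℕ := G.degree i with hd
  set N := G.neighborFinset i with hN
  have eq1 : (d : ℝ) * x i - ∑ w ∈ N, (σ s(i, w) : ℝ) * x w = μ * x i := by
    have := congrFun hx i
    rwa [kirchhoff_mulVec, Pi.smul_apply, smul_eq_mul] at this
  have hcard : N.card = d := (G.card_neighborFinset_eq_degree i).symm ▸ rfl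
  have hS : |∑ w ∈ N, (σ s(i, w) : ℝ) * x w| ≤ (d : ℝ) * M := by
    calc |∑ w ∈ N, (σ s(i, w) : ℝ) * x w| ≤ ∑ w ∈ N, |(σ s(i, w) : ℝ) * x w| :=
          Finset.abs_sum_le_sum_abs _ _
      _ ≤ ∑ _w ∈ N, M := by
          apply Finset.sum_le_sum
          intro w hw
          have hadj : G.Adj i w := (G.mem_neighborFinset _ _).1 hw
          rw [abs_mul, sigma_abs G σ hσ hadj, one_mul]
          exact hi' w
      _ = (d : ℝ) * M := by rw [Finset.sum_const, hcard, nsmul_eq_mul]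
  have h2 : |μ - (d : ℝ)| * M ≤ (d : ℝ) * M := by
    have h3 : (μ - (d : ℝ)) * x i = -(∑ w ∈ N, (σ s(i, w) : ℝ) * x w) := by linarith [eq1]
    calc |μ - (d : ℝ)| * M = |(μ - (d : ℝ)) * x i| := by rw [abs_mul, hM]
      _ = |∑ w ∈ N, (σ s(i, w) : ℝ) * x w| := by rw [h3, abs_neg]
      _ ≤ (d : ℝ) * M := hS
  have h4 : μ - (d : ℝ) ≤ (d : ℝ) := by
    have h5 := le_abs_self (μ - (d : ℝ))
    nlinarith [hipos]
  have h6 : (d : ℝ) ≤ (Fintype.card V : ℝ) - 1 := by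
    have : d + 1 ≤ Fintype.card V := G.degree_lt_card_verts i
    have : (d : ℝ) + 1 ≤ (Fintype.card V : ℝ) := by exact_mod_cast this
    linarith
  linarith

lemma exists_eigen [Nonempty V] :
    ∃ μ, Module.End.HasEigenvalue (kirchhoff G σ).mulVecLin μ := by
  have hH := kirchhoff_isHermitian G σ
  let j : V := Classical.arbitrary V
  refine ⟨hH.eigenvalues j,
    Module.End.hasEigenvalue_of_hasEigenvector (x := ⇑(hH.eigenvectorBasis j)) ⟨?_, ?_⟩⟩
  · rw [Module.End.mem_eigenspace_iff, Matrix.mulVecLin_apply]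
    exact hH.mulVec_eigenvectorBasis j
  · have h0 := hH.eigenvectorBasis.orthonormal.ne_zero j
    intro h
    apply h0
    ext k
    exact congrFun h k

end Aux

/-- For a signed simple graph `Σ` on `n` vertices, `λ¹(K(Σ)) ≤ 2(n - 1)`, with equality
iff `Σ` is switching equivalent to `-Kₙ`: the underlying graph is complete and there is
`θ : V → {±1}` with `σ(vw) = -θ(v)θ(w)` on every edge. -/


theorem kirchhoff_max_eigenvalue_le {V : Type*} [Fintype V] [DecidableEq V] [Nonempty V]
    (G : SimpleGraph V) (σ : Sym2 V → ℤ)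
    (hσ : ∀ e ∈ G.edgeSet, σ e = 1 ∨ σ e = -1) :
    maxEigen (kirchhoff G σ) ≤ 2 * ((Fintype.card V : ℝ) - 1) ∧
    (maxEigen (kirchhoff G σ) = 2 * ((Fintype.card V : ℝ) - 1) ↔
      (G = ⊤ ∧ ∃ θ : V → ℤ, (∀ v, θ v = 1 ∨ θ v = -1) ∧
        ∀ v w : V, G.Adj v w → σ s(v, w) = -(θ v * θ w))) := by
  classical
  set B : ℝ := 2 * ((Fintype.card V : ℝ) - 1) with hB
  set S : Set ℝ := {μ : ℝ | Module.End.HasEigenvalue (kirchhoff G σ).mulVecLin μ} with hSdef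
  have hB0 : 0 ≤ B := by
    have h1 : 1 ≤ (Fintype.card V : ℝ) := by exact_mod_cast Fintype.card_pos
    rw [hB]; linarith
  have hub : ∀ μ ∈ S, μ ≤ B := fun μ hμ => eigenvalue_le G σ hσ hμ
  have hbdd : BddAbove S := ⟨B, hub⟩
  have hbound : maxEigen (kirchhoff G σ) ≤ B := Real.sSup_le hub hB0
  refine ⟨hbound, ?_, ?_⟩
  · intro h
    obtain ⟨μ0, hμ0⟩ := exists_eigen G σ
    have hfin : S.Finite := Module.End.finite_hasEigenvalue (kirchhoff G σ).mulVecLin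
    have hmemS : sSup S ∈ S := Set.Nonempty.csSup_mem ⟨μ0, hμ0⟩ hfin
    have hmem : B ∈ S := by
      have hSS : sSup S = B := h
      rwa [hSS] at hmemS
    obtain ⟨x, hx1, hx0⟩ := Module.End.HasEigenvalue.exists_hasEigenvector hmem
    have hx : kirchhoff G σ *ᵥ x = B • x := by
      have := Module.End.mem_eigenspace_iff.1 hx1
      rwa [Matrix.mulVecLin_apply] at this
    obtain ⟨i, -, hi⟩ := Finset.exists_max_image Finset.univ (fun w => |x w|) Finset.univ_nonempty
    have hi' : ∀ w, |x w| ≤ |x i| := fun w => hi w (Finset.mem_univ w)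
    have hipos : 0 < |x i| := by
      obtain ⟨w, hw⟩ := Function.ne_iff.1 hx0
      exact lt_of_lt_of_le (abs_pos.2 hw) (hi' w)
    have hkeyi := key_lemma G σ hσ x hx i hi' hipos
    have hall : ∀ w, |x w| = |x i| := by
      intro w
      rcases eq_or_ne w i with rfl | hne
      · rfl
      · have hadj := hkeyi.1 w hne
        rw [hkeyi.2 w hadj, abs_mul, abs_neg, sigma_abs G σ hσ hadj, one_mul]
    have hkeyv : ∀ v : V, (∀ w, w ≠ v → G.Adj v w) ∧
        ∀ w, G.Adj v w → x w = -(σ s(v, w) : ℝ) * x v := by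
      intro v
      refine key_lemma G σ hσ x hx v (fun w => ?_) ?_
      · rw [hall v]; exact hi' w
      · rw [hall v]; exact hipos
    constructor
    · ext v w
      simp only [SimpleGraph.top_adj]
      constructor
      · exact fun hadj => hadj.ne
      · intro hvw
        exact (hkeyv v).1 w (Ne.symm hvw)
    · set θ : V → ℤ := fun v => if 0 ≤ x v then 1 else -1 with hθ
      have hθpm : ∀ v, θ v = 1 ∨ θ v = -1 := by
        intro v; rw [hθ]; dsimp only; split
        · exact Or.inl rfl
        · exact Or.inr rfl
      have hθ2 : ∀ v, (θ v : ℝ) * (θ v : ℝ) = 1 := by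
        intro v; rcases hθpm v with h1 | h1 <;> rw [h1] <;> norm_num
      have hθx : ∀ v, x v = (θ v : ℝ) * |x i| := by
        intro v
        rw [hθ]; dsimp only; split
        · rw [Int.cast_one, one_mul, ← hall v, abs_of_nonneg ‹_›]
        · rw [← hall v, abs_of_neg (lt_of_not_ge ‹_›)]; push_cast; ring
      refine ⟨θ, hθpm, ?_⟩
      intro v w hadj
      have heq := (hkeyv v).2 w hadj
      rw [hθx w, hθx v] at heq
      have hM0 : |x i| ≠ 0 := ne_of_gt hipos
      have h2 : (θ w : ℝ) = -(σ s(v, w) : ℝ) * (θ v : ℝ) := by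
        apply mul_right_cancel₀ hM0
        linear_combination heq
      have hfinal : ((σ s(v, w) : ℤ) : ℝ) = ((-(θ v * θ w) : ℤ) : ℝ) := by
        push_cast
        linear_combination ((θ v : ℝ)) * h2 - ((σ s(v, w) : ℤ) : ℝ) * hθ2 v
      exact_mod_cast hfinal
  · rintro ⟨hG, θ, hθpm, hθσ⟩
    have hθ2 : ∀ v, (θ v : ℝ) * (θ v : ℝ) = 1 := by
      intro v; rcases hθpm v with h1 | h1 <;> rw [h1] <;> norm_num
    have hdeg : ∀ v : V, (G.degree v : ℝ) = (Fintype.card V : ℝ) - 1 := by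
      intro v
      have hN : G.neighborFinset v = Finset.univ.erase v := by
        ext w
        rw [SimpleGraph.mem_neighborFinset, Finset.mem_erase, hG]
        simp [ne_comm, eq_comm]
      have hd : G.degree v = Fintype.card V - 1 := by
        rw [← SimpleGraph.card_neighborFinset_eq_degree, hN,
          Finset.card_erase_of_mem (Finset.mem_univ v), Finset.card_univ]
      rw [hd, Nat.cast_sub (Fintype.card_pos_iff.2 ⟨v⟩)]
      norm_num
    set x : V → ℝ := fun v => (θ v : ℝ) with hxdef
    have hx0 : x ≠ 0 := by
      intro h
      have h1 := congrFun h (Classical.arbitrary V)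
      rcases hθpm (Classical.arbitrary V) with h2 | h2 <;>
        rw [hxdef] at h1 <;> dsimp only at h1 <;> rw [h2] at h1 <;> norm_num at h1
    have hxeig : kirchhoff G σ *ᵥ x = B • x := by
      funext v
      rw [kirchhoff_mulVec, Pi.smul_apply, smul_eq_mul]
      have hterm : ∀ w ∈ G.neighborFinset v, (σ s(v, w) : ℝ) * x w = -(θ v : ℝ) := by
        intro w hw
        have hadj : G.Adj v w := (G.mem_neighborFinset _ _).1 hw
        have hc : ((σ s(v, w) : ℤ) : ℝ) = ((-(θ v * θ w) : ℤ) : ℝ) := by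
          exact_mod_cast congrArg (fun z : ℤ => (z : ℝ)) (hθσ v w hadj)
        push_cast at hc
        rw [hxdef]; dsimp only
        rw [hc]
        linear_combination (-(θ v : ℝ)) * hθ2 w
      rw [Finset.sum_congr rfl hterm, Finset.sum_const, nsmul_eq_mul,
        SimpleGraph.card_neighborFinset_eq_degree, hdeg v]
      have hxv : x v = (θ v : ℝ) := rfl
      rw [hxv, hB]
      ring
    have hmem : B ∈ S := by
      apply Module.End.hasEigenvalue_of_hasEigenvector (x := x)
      exact ⟨Module.End.mem_eigenspace_iff.2 (by rw [Matrix.mulVecLin_apply]; exact hxeig), hx0⟩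
    exact le_antisymm hbound (le_csSup hbdd hmem)
end
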